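/- Let F(y,v) = ((Υ₀(y)(1−y) − v)y, (b(Υ₀(y)(1−y) − v) + Γ₀(y)(2 − (6+a)(1−y)))v) be a planar vector field with Υ₀, Γ₀ ∈ C¹ and b > 0. Then with φ(y,v) = 1/(y^{1+b} v) on (0,1)×(0,∞), one has ∇·(φF)(y,v) = −φ(y,v)·((bΥ₀(y) − y Υ₀'(y))(1−y) + yΥ₀(y)). In particular, if (bΥ₀(y) − yΥ₀'(y))(1−y) + yΥ₀(y) > 0 for all y ∈ (0,1), then ∇·(φF) < 0 on (0,1)×(0,∞). -/

import Mathlib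

open Real

/-- First component of the planar vector field. -/
noncomputable def planarF1 (Υ₀ : ℝ → ℝ) (y v : ℝ) : ℝ :=
  (Υ₀ y * (1 - y) - v) * y

/-- Second component of the planar vector field. -/
noncomputable def planarF2 (Υ₀ Γ₀ : ℝ → ℝ) (a b : ℝ) (y v : ℝ) : ℝ :=
  (b * (Υ₀ y * (1 - y) - v) + Γ₀ y * (2 - (6 + a) * (1 - y))) * v

/-- The Dulac function φ(y,v) = 1/(y^{1+b} v). -/
noncomputable def dulacPhi (b y v : ℝ) : ℝ := 1 / (y ^ (1 + b) * v)

/-!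
On `y > 0, v ≠ 0` the products simplify: `φ F₁ = (Υ₀(y)(1 - y) - v) y^{-b} / v` and
`φ F₂ = (c(y) - b v) / y^{1+b}` is affine in `v`. Both partial derivatives are then multiples of
`φ = y^{-b-1} / v`, and their sum collapses by ring arithmetic; the sign claim follows from `φ > 0`.
-/

lemma dulacPhi_pos {b y v : ℝ} (hy : 0 < y) (hv : 0 < v) : 0 < dulacPhi b y v :=
  one_div_pos.2 (mul_pos (rpow_pos_of_pos hy _) hv)

lemma dulacPhi_eq_rpow_div {b y : ℝ} (hy : 0 < y) (v : ℝ) :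
    dulacPhi b y v = y ^ (-b - 1) / v := by
  rw [dulacPhi, show -b - 1 = -(1 + b) by ring, rpow_neg hy.le, one_div, mul_inv, div_eq_mul_inv]

lemma dulacPhi_mul_planarF1 (Υ₀ : ℝ → ℝ) {b t : ℝ} (ht : 0 < t) (v : ℝ) :
    dulacPhi b t v * planarF1 Υ₀ t v = (Υ₀ t * (1 - t) - v) * t ^ (-b) / v := by
  rw [dulacPhi_eq_rpow_div ht, rpow_sub_one ht.ne', planarF1]
  field_simp

lemma dulacPhi_mul_planarF2 (Υ₀ Γ₀ : ℝ → ℝ) (a b y : ℝ) {w : ℝ} (hw : w ≠ 0) :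
    dulacPhi b y w * planarF2 Υ₀ Γ₀ a b y w
      = (b * Υ₀ y * (1 - y) + Γ₀ y * (2 - (6 + a) * (1 - y)) - b * w) / y ^ (1 + b) := by
  rw [dulacPhi, planarF2]
  field_simp
  ring

lemma hasDerivAt_dulacPhi_mul_planarF1 {Υ₀ : ℝ → ℝ} {b y : ℝ} (hy : 0 < y)
    (hΥ : DifferentiableAt ℝ Υ₀ y) (v : ℝ) :
    HasDerivAt (fun t => dulacPhi b t v * planarF1 Υ₀ t v)
      ((y * (deriv Υ₀ y * (1 - y) - Υ₀ y) - b * (Υ₀ y * (1 - y) - v)) * dulacPhi b y v) y := by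
  have hg : HasDerivAt (fun t => Υ₀ t * (1 - t) - v) (deriv Υ₀ y * (1 - y) - Υ₀ y) y :=
    ((hΥ.hasDerivAt.mul ((hasDerivAt_id' y).const_sub 1)).sub_const v).congr_deriv (by ring)
  have hprod : HasDerivAt (fun t => (Υ₀ t * (1 - t) - v) * t ^ (-b) / v)
      (((deriv Υ₀ y * (1 - y) - Υ₀ y) * y ^ (-b) + (Υ₀ y * (1 - y) - v) * (-b * y ^ (-b - 1)))
        / v) y :=
    (hg.mul (hasDerivAt_rpow_const (p := -b) (Or.inl hy.ne'))).div_const v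
  have hy_eq : y ^ (-b) = y * y ^ (-b - 1) := by
    rw [rpow_sub_one hy.ne']
    field_simp
  refine (hprod.congr_of_eventuallyEq ?_).congr_deriv ?_
  · filter_upwards [Ioi_mem_nhds hy] with t ht
    exact dulacPhi_mul_planarF1 Υ₀ ht v
  · rw [dulacPhi_eq_rpow_div hy, hy_eq]
    ring

lemma hasDerivAt_dulacPhi_mul_planarF2 (Υ₀ Γ₀ : ℝ → ℝ) (a b y : ℝ) {v : ℝ} (hv : v ≠ 0) :
    HasDerivAt (fun w => dulacPhi b y w * planarF2 Υ₀ Γ₀ a b y w)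
      (-b * v * dulacPhi b y v) v := by
  have hlin : HasDerivAt
      (fun w => (b * Υ₀ y * (1 - y) + Γ₀ y * (2 - (6 + a) * (1 - y)) - b * w) / y ^ (1 + b))
      (-(b * 1) / y ^ (1 + b)) v :=
    (((hasDerivAt_id' v).const_mul b).const_sub _).div_const _
  refine (hlin.congr_of_eventuallyEq ?_).congr_deriv ?_
  · filter_upwards [isOpen_ne.mem_nhds hv] with w hw
    exact dulacPhi_mul_planarF2 Υ₀ Γ₀ a b y hw
  · rw [dulacPhi]
    field_simp

lemma dulacPhi_divergence_eq {Υ₀ : ℝ → ℝ} (Γ₀ : ℝ → ℝ) (a : ℝ) {b y v : ℝ} (hy : 0 < y)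
    (hv : v ≠ 0) (hΥ : DifferentiableAt ℝ Υ₀ y) :
    deriv (fun t => dulacPhi b t v * planarF1 Υ₀ t v) y
        + deriv (fun w => dulacPhi b y w * planarF2 Υ₀ Γ₀ a b y w) v
      = -dulacPhi b y v * ((b * Υ₀ y - y * deriv Υ₀ y) * (1 - y) + y * Υ₀ y) := by
  rw [(hasDerivAt_dulacPhi_mul_planarF1 hy hΥ v).deriv,
    (hasDerivAt_dulacPhi_mul_planarF2 Υ₀ Γ₀ a b y hv).deriv]
  ring

theorem dulac_divergence_general (Υ₀ Γ₀ : ℝ → ℝ) (a b : ℝ)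
    (hΥ : ContDiff ℝ 1 Υ₀) :
    (∀ y ∈ Set.Ioo (0 : ℝ) 1, ∀ v ∈ Set.Ioi (0 : ℝ),
      deriv (fun t => dulacPhi b t v * planarF1 Υ₀ t v) y
        + deriv (fun w => dulacPhi b y w * planarF2 Υ₀ Γ₀ a b y w) v
      = -dulacPhi b y v *
          ((b * Υ₀ y - y * deriv Υ₀ y) * (1 - y) + y * Υ₀ y)) ∧
    ((∀ y ∈ Set.Ioo (0 : ℝ) 1,
        0 < (b * Υ₀ y - y * deriv Υ₀ y) * (1 - y) + y * Υ₀ y) →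
      ∀ y ∈ Set.Ioo (0 : ℝ) 1, ∀ v ∈ Set.Ioi (0 : ℝ),
        deriv (fun t => dulacPhi b t v * planarF1 Υ₀ t v) y
          + deriv (fun w => dulacPhi b y w * planarF2 Υ₀ Γ₀ a b y w) v < 0) := by
  have hdiv (y : ℝ) (hy : y ∈ Set.Ioo (0 : ℝ) 1) (v : ℝ) (hv : v ∈ Set.Ioi (0 : ℝ)) :=
    dulacPhi_divergence_eq Γ₀ a (b := b) hy.1 (ne_of_gt hv) (hΥ.differentiable one_ne_zero y)
  refine ⟨hdiv, fun hpos y hy v hv => ?_⟩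
  rw [hdiv y hy v hv, neg_mul]
  exact neg_neg_of_pos (mul_pos (dulacPhi_pos hy.1 hv) (hpos y hy))

/-- Divergence computation for the Dulac function φ = 1/(y^{1+b} v). -/
theorem dulac_divergence (Υ₀ Γ₀ : ℝ → ℝ) (a b : ℝ) (hb : 0 < b)
    (hΥ : ContDiff ℝ 1 Υ₀) (hΓ : ContDiff ℝ 1 Γ₀) :
    (∀ y ∈ Set.Ioo (0 : ℝ) 1, ∀ v ∈ Set.Ioi (0 : ℝ),
      deriv (fun t => dulacPhi b t v * planarF1 Υ₀ t v) y
        + deriv (fun w => dulacPhi b y w * planarF2 Υ₀ Γ₀ a b y w) v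
      = -dulacPhi b y v *
          ((b * Υ₀ y - y * deriv Υ₀ y) * (1 - y) + y * Υ₀ y)) ∧
    ((∀ y ∈ Set.Ioo (0 : ℝ) 1,
        0 < (b * Υ₀ y - y * deriv Υ₀ y) * (1 - y) + y * Υ₀ y) →
      ∀ y ∈ Set.Ioo (0 : ℝ) 1, ∀ v ∈ Set.Ioi (0 : ℝ),
        deriv (fun t => dulacPhi b t v * planarF1 Υ₀ t v) y
          + deriv (fun w => dulacPhi b y w * planarF2 Υ₀ Γ₀ a b y w) v < 0) :=
  dulac_divergence_general Υ₀ Γ₀ a b hΥ
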